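/- arXiv:2409.14528 — 2 statements merged into one kernel-verified Lean document; each statement's English description precedes it below -/
import Mathlib

section
/- Let G be an MP-digraph. Then its multipath matroid M_G is isomorphic to a direct sum of uniform matroids. -/
set_option autoImplicit false

noncomputable section

attribute [local instance] Classical.propDecidable

/-- A (finite) directed multigraph: finitely many vertices and edges, each edge
has a source and a target.  (Loops and, a priori, parallel edges are allowed;
the paper's convention of at most one edge between an ordered pair of distinct
vertices is imposed via `DiGraph.EdgeUnique`.) -/
structure DiGraph where
  V : Type
  E : Type
  [fintV : Fintype V]
  [decV : DecidableEq V]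
  [fintE : Fintype E]
  [decE : DecidableEq E]
  s : E → V
  t : E → V

attribute [instance] DiGraph.fintV DiGraph.decV DiGraph.fintE DiGraph.decE

namespace DiGraph

/-- For each ordered pair of *distinct* vertices there is at most one edge. -/
def EdgeUnique (G : DiGraph) : Prop :=
  ∀ e f : G.E, G.s e = G.s f → G.t e = G.t f → G.s e ≠ G.t e → e = f

/-- G has no loops. -/
def Loopless (G : DiGraph) : Prop := ∀ e : G.E, G.s e ≠ G.t e

/-- A coherently oriented cycle, given as the (cyclically ordered) list of its
edges: the list is nonempty, has no repeated edges, visits no vertex twice,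
and the target of each edge is the source of the next one (cyclically).
A loop is a coherently oriented cycle of length 1. -/
def IsCohCycle (G : DiGraph) (c : List G.E) : Prop :=
  c ≠ [] ∧ c.Nodup ∧ (c.map G.s).Nodup ∧
    ∀ i : Fin c.length,
      G.t (c.get i) =
        G.s (c.get ⟨(i.val + 1) % c.length,
          Nat.mod_lt _ (Nat.lt_of_le_of_lt (Nat.zero_le _) i.isLt)⟩)

/-- `m` is (the edge set of) a multipath of `G`: the corresponding spanning
subgraph has no loops, in-degree and out-degree at most one at each vertex, and
contains no coherently oriented cycle; equivalently, every connected component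
is a single vertex or a simple (directed) path. -/
def IsMultipath (G : DiGraph) (m : Finset G.E) : Prop :=
  (∀ e ∈ m, G.s e ≠ G.t e) ∧
  (∀ e ∈ m, ∀ f ∈ m, G.s e = G.s f → e = f) ∧
  (∀ e ∈ m, ∀ f ∈ m, G.t e = G.t f → e = f) ∧
  ¬∃ c : List G.E, IsCohCycle G c ∧ ∀ g ∈ c, g ∈ m

/-- The forbidden pattern (A): vertices v0,v1,v2 and edges (v1,v0), (v0,v2), (v1,v2). -/
def HasPatternA (G : DiGraph) : Prop :=
  ∃ v0 v1 v2 : G.V, v0 ≠ v1 ∧ v0 ≠ v2 ∧ v1 ≠ v2 ∧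
    (∃ e : G.E, G.s e = v1 ∧ G.t e = v0) ∧
    (∃ e : G.E, G.s e = v0 ∧ G.t e = v2) ∧
    (∃ e : G.E, G.s e = v1 ∧ G.t e = v2)

/-- The reverse of pattern (A). -/
def HasPatternArev (G : DiGraph) : Prop :=
  ∃ v0 v1 v2 : G.V, v0 ≠ v1 ∧ v0 ≠ v2 ∧ v1 ≠ v2 ∧
    (∃ e : G.E, G.s e = v0 ∧ G.t e = v1) ∧
    (∃ e : G.E, G.s e = v2 ∧ G.t e = v0) ∧
    (∃ e : G.E, G.s e = v2 ∧ G.t e = v1)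

/-- The forbidden pattern (B): vertices v0,v1,v2,v3 and edges (v0,v1), (v2,v1), (v2,v3). -/
def HasPatternB (G : DiGraph) : Prop :=
  ∃ v0 v1 v2 v3 : G.V,
    v0 ≠ v1 ∧ v0 ≠ v2 ∧ v0 ≠ v3 ∧ v1 ≠ v2 ∧ v1 ≠ v3 ∧ v2 ≠ v3 ∧
    (∃ e : G.E, G.s e = v0 ∧ G.t e = v1) ∧
    (∃ e : G.E, G.s e = v2 ∧ G.t e = v1) ∧
    (∃ e : G.E, G.s e = v2 ∧ G.t e = v3)

/-- The reverse of pattern (B). -/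
def HasPatternBrev (G : DiGraph) : Prop :=
  ∃ v0 v1 v2 v3 : G.V,
    v0 ≠ v1 ∧ v0 ≠ v2 ∧ v0 ≠ v3 ∧ v1 ≠ v2 ∧ v1 ≠ v3 ∧ v2 ≠ v3 ∧
    (∃ e : G.E, G.s e = v1 ∧ G.t e = v0) ∧
    (∃ e : G.E, G.s e = v1 ∧ G.t e = v2) ∧
    (∃ e : G.E, G.s e = v3 ∧ G.t e = v2)

/-- (MP1): G contains no copy, up to reversing all orientations, of the
patterns (A) and (B). -/
def MP1 (G : DiGraph) : Prop :=
  ¬HasPatternA G ∧ ¬HasPatternArev G ∧ ¬HasPatternB G ∧ ¬HasPatternBrev G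

/-- (MP2): every coherently oriented cycle of length ≥ 2 (i.e. loops excluded)
is a connected component: any edge incident to a vertex of the cycle belongs
to the cycle. -/
def MP2 (G : DiGraph) : Prop :=
  ∀ c : List G.E, IsCohCycle G c → 2 ≤ c.length →
    ∀ f : G.E, (∃ g ∈ c, G.s g = G.s f ∨ G.s g = G.t f) → f ∈ c

def IsMPDigraph (G : DiGraph) : Prop := MP1 G ∧ MP2 G

/-- The axioms (I1), (I2), (I3) for a family of independent sets of a matroid. -/
def IsIndepFamily {α : Type} [DecidableEq α] (I : Finset α → Prop) : Prop :=
  I ∅ ∧ (∀ A B : Finset α, I A → B ⊆ A → I B) ∧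
    ∀ A B : Finset α, I A → I B → B.card < A.card →
      ∃ x ∈ A, x ∉ B ∧ I (insert x B)

/-- `m` is the edge set of a linear sink (two non-loop edges with a common
target and distinct sources). -/
def IsLinearSinkSet (G : DiGraph) (m : Finset G.E) : Prop :=
  ∃ e1 e2 : G.E, e1 ≠ e2 ∧ m = {e1, e2} ∧ G.t e1 = G.t e2 ∧
    G.s e1 ≠ G.s e2 ∧ G.s e1 ≠ G.t e1 ∧ G.s e2 ≠ G.t e2

/-- `m` is the edge set of a linear source (two non-loop edges with a common
source and distinct targets). -/
def IsLinearSourceSet (G : DiGraph) (m : Finset G.E) : Prop :=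
  ∃ e1 e2 : G.E, e1 ≠ e2 ∧ m = {e1, e2} ∧ G.s e1 = G.s e2 ∧
    G.t e1 ≠ G.t e2 ∧ G.s e1 ≠ G.t e1 ∧ G.s e2 ≠ G.t e2

/-- `m` is the edge set of a coherently oriented cycle (possibly a loop). -/
def IsCohCycleSet (G : DiGraph) (m : Finset G.E) : Prop :=
  ∃ c : List G.E, IsCohCycle G c ∧ m = c.toFinset

/-- Two vertices are adjacent if they are the endpoints of a common edge. -/
def adj (G : DiGraph) (v w : G.V) : Prop :=
  ∃ e : G.E, (G.s e = v ∧ G.t e = w) ∨ (G.s e = w ∧ G.t e = v)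

/-- Two vertices lie in the same connected component. -/
def connRel (G : DiGraph) : G.V → G.V → Prop := Relation.EqvGen (adj G)

/-- G is connected. -/
def ConnectedD (G : DiGraph) : Prop := Nonempty G.V ∧ ∀ v w : G.V, connRel G v w

/-- The number of connected components of G (isolated vertices count). -/
def numComponents (G : DiGraph) : ℕ :=
  Nat.card (Quotient (Relation.EqvGen.setoid (adj G)))

/-- `S` is the set of edges of one of the connected components of `G`. -/
def IsComponentEdges (G : DiGraph) (S : Finset G.E) : Prop :=
  ∃ v : G.V, S = Finset.univ.filter (fun e => connRel G v (G.s e))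

/-- in-degree of `v` in the subgraph spanned by the edges of `R`. -/
def indegIn (G : DiGraph) (R : Finset G.E) (v : G.V) : ℕ :=
  (R.filter (fun e => G.t e = v)).card

/-- out-degree of `v` in the subgraph spanned by the edges of `R`. -/
def outdegIn (G : DiGraph) (R : Finset G.E) (v : G.V) : ℕ :=
  (R.filter (fun e => G.s e = v)).card

def indeg (G : DiGraph) (v : G.V) : ℕ := indegIn G Finset.univ v
def outdeg (G : DiGraph) (v : G.V) : ℕ := outdegIn G Finset.univ v

/-- `v` is a vertex of the subgraph spanned by the edge set `R`. -/
def IncidentTo (G : DiGraph) (R : Finset G.E) (v : G.V) : Prop :=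
  ∃ e ∈ R, G.s e = v ∨ G.t e = v

/-- `v` is stable in the subgraph spanned by `R`. -/
def StableIn (G : DiGraph) (R : Finset G.E) (v : G.V) : Prop :=
  indegIn G R v = 0 ∨ outdegIn G R v = 0

/-- `v` is unstable in `G`. -/
def UnstableG (G : DiGraph) (v : G.V) : Prop :=
  0 < indeg G v ∧ 0 < outdeg G v

/-- adjacency within the subgraph spanned by `R`. -/
def adjIn (G : DiGraph) (R : Finset G.E) (a b : G.V) : Prop :=
  ∃ g ∈ R, (G.s g = a ∧ G.t g = b) ∨ (G.s g = b ∧ G.t g = a)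

/-- The subgraph spanned by the edge set `R` is connected. -/
def EdgeConnected (G : DiGraph) (R : Finset G.E) : Prop :=
  ∀ e ∈ R, ∀ f ∈ R, Relation.EqvGen (adjIn G R) (G.s e) (G.s f)

/-- `R` spans a dynamical region of `G`: it is connected, has at least one
edge, every boundary vertex is unstable in `G` but stable in `R` and in its
complement, and no edge of `R` lies on an oriented cycle of `G` not contained
in `R`. -/
def IsDynRegion (G : DiGraph) (R : Finset G.E) : Prop :=
  R.Nonempty ∧ EdgeConnected G R ∧
  (∀ v : G.V, IncidentTo G R v → IncidentTo G (Finset.univ \ R) v →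
     UnstableG G v ∧ StableIn G R v ∧ StableIn G (Finset.univ \ R) v) ∧
  (∀ c : List G.E, IsCohCycle G c → (∃ g ∈ c, g ∈ R) → ∀ g ∈ c, g ∈ R)

/-- A dynamical module is a minimal dynamical region. -/
def IsDynModule (G : DiGraph) (R : Finset G.E) : Prop :=
  IsDynRegion G R ∧ ∀ R' ⊆ R, IsDynRegion G R' → R' = R

/-- `G` is a sink on `n+1` vertices. -/
def IsSinkGraph (G : DiGraph) : Prop :=
  Loopless G ∧ Fintype.card G.V = Fintype.card G.E + 1 ∧
    ∃! v : G.V, ∀ e : G.E, G.t e = v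

/-- `G` is a source on `n+1` vertices. -/
def IsSourceGraph (G : DiGraph) : Prop :=
  Loopless G ∧ Fintype.card G.V = Fintype.card G.E + 1 ∧
    ∃! v : G.V, ∀ e : G.E, G.s e = v

/-- `R` spans a sink: all its edges are non-loops with a common target and
pairwise distinct sources. -/
def IsSinkSet (G : DiGraph) (R : Finset G.E) : Prop :=
  ∃ v : G.V, (∀ e ∈ R, G.t e = v ∧ G.s e ≠ v) ∧
    ∀ e ∈ R, ∀ f ∈ R, G.s e = G.s f → e = f

/-- `R` spans a source. -/
def IsSourceSet (G : DiGraph) (R : Finset G.E) : Prop :=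
  ∃ v : G.V, (∀ e ∈ R, G.s e = v ∧ G.t e ≠ v) ∧
    ∀ e ∈ R, ∀ f ∈ R, G.t e = G.t f → e = f

/-- The whole digraph `G` is a coherently oriented cycle. -/
def IsCohCycleGraph (G : DiGraph) : Prop :=
  ∃ c : List G.E, IsCohCycle G c ∧ (∀ e : G.E, e ∈ c) ∧
    ∀ v : G.V, ∃ g ∈ c, G.s g = v

/-- Rank function of the multipath matroid: the size of a largest multipath
contained in `A`. -/
def mrank (G : DiGraph) (A : Finset G.E) : ℕ :=
  (A.powerset.filter (fun m => IsMultipath G m)).sup Finset.card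

/-- The Tutte polynomial of the multipath matroid of `G`, evaluated at `(x,y)`. -/
def tutte (G : DiGraph) (x y : ℤ) : ℤ :=
  ∑ A : Finset G.E,
    (x - 1) ^ (mrank G Finset.univ - mrank G A) *
      (y - 1) ^ (A.card - mrank G A)

/-- `e` is a loop of the multipath matroid. -/
def IsMatroidLoop (G : DiGraph) (e : G.E) : Prop := ¬IsMultipath G {e}

/-- `e` is a coloop of the multipath matroid: it belongs to every maximal
independent set. -/
def IsColoop (G : DiGraph) (e : G.E) : Prop :=
  ∀ m : Finset G.E, IsMultipath G m →
    (∀ m' : Finset G.E, IsMultipath G m' → m ⊆ m' → m' = m) → e ∈ m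

/-- The digraph obtained from `G` by deleting the edge `e`. -/
def deleteEdge (G : DiGraph) (e : G.E) : DiGraph where
  V := G.V
  E := {f : G.E // f ≠ e}
  s := fun f => G.s f.val
  t := fun f => G.t f.val

/-- The vertex set of the MP-contraction `G ⫽ e`: the vertices of `G` other
than the endpoints of `e`, together with a new vertex `x = Sum.inr ()`. -/
def CVert (G : DiGraph) (e : G.E) : Type :=
  {u : G.V // u ≠ G.s e ∧ u ≠ G.t e} ⊕ Unit

instance (G : DiGraph) (e : G.E) : Fintype (CVert G e) := by
  unfold CVert; infer_instance

instance (G : DiGraph) (e : G.E) : DecidableEq (CVert G e) := by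
  unfold CVert; infer_instance

/-- Source, in `G ⫽ e`, of the edge coming from the edge `f` of `G`
(for `e = (v,w)`, the new source is `x` iff `s f ∈ {v,w}` or `t f = w`). -/
def contrS (G : DiGraph) (e f : G.E) : CVert G e :=
  if h : G.s f = G.s e ∨ G.s f = G.t e ∨ G.t f = G.t e then Sum.inr ()
  else Sum.inl ⟨G.s f, by push_neg at h; exact ⟨h.1, h.2.1⟩⟩

/-- Target, in `G ⫽ e`, of the edge coming from the edge `f` of `G`
(for `e = (v,w)`, the new target is `x` iff `t f ∈ {v,w}` or `s f = v`). -/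
def contrT (G : DiGraph) (e f : G.E) : CVert G e :=
  if h : G.t f = G.s e ∨ G.t f = G.t e ∨ G.s f = G.s e then Sum.inr ()
  else Sum.inl ⟨G.t f, by push_neg at h; exact ⟨h.1, h.2.1⟩⟩

/-- The MP-contraction `G ⫽ e`. -/
def mpContract (G : DiGraph) (e : G.E) : DiGraph where
  V := CVert G e
  E := {f : G.E // f ≠ e}
  s := fun f => contrS G e f.val
  t := fun f => contrT G e f.val

/-- The digraph `C̃_e(G)`: the MP-contraction `G ⫽ e` with all loops at the
new vertex `x` deleted. -/
def tildeC (G : DiGraph) (e : G.E) : DiGraph where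
  V := CVert G e
  E := {f : G.E // f ≠ e ∧
         ¬(contrS G e f = Sum.inr () ∧ contrT G e f = Sum.inr ())}
  s := fun f => contrS G e f.val
  t := fun f => contrT G e f.val

/-- The classical contraction `G / e` of a non-loop edge `e = (v,w)`:
identify `w` with `v` and delete `e`. -/
def contractClassical (G : DiGraph) (e : G.E) (hne : G.s e ≠ G.t e) : DiGraph where
  V := {u : G.V // u ≠ G.t e}
  E := {f : G.E // f ≠ e}
  s := fun f => if h : G.s f.val = G.t e then ⟨G.s e, hne⟩ else ⟨G.s f.val, h⟩
  t := fun f => if h : G.t f.val = G.t e then ⟨G.s e, hne⟩ else ⟨G.t f.val, h⟩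

/-- A flowing k-colouring of `G`. -/
def IsFlowing (G : DiGraph) (k : ℕ) (c : G.V → Fin k) : Prop :=
  (∀ e : G.E, c (G.s e) ≠ c (G.t e)) ∧
  (∀ e f : G.E, G.t e = G.t f → c (G.s e) = c (G.s f)) ∧
  (∀ e f : G.E, G.s e = G.s f → c (G.t e) = c (G.t f))

/-- The number of flowing k-colourings of `G`. -/
def tau (G : DiGraph) (k : ℕ) : ℕ :=
  Nat.card {c : G.V → Fin k // IsFlowing G k c}

/-- The spanning subgraph of `G` with edge set `S`. -/
def subgraphOn (G : DiGraph) (S : Finset G.E) : DiGraph where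
  V := G.V
  E := {f : G.E // f ∈ S}
  s := fun f => G.s f.val
  t := fun f => G.t f.val

/-- The underlying undirected multigraph of `G` contains a cycle
(of length ≥ 1; a single loop, or two parallel/antiparallel edges, count). -/
def HasUndirCycle (G : DiGraph) : Prop :=
  ∃ (n : ℕ) (ed : Fin n → G.E) (vx : Fin n → G.V),
    0 < n ∧ Function.Injective ed ∧ Function.Injective vx ∧
    ∀ i : Fin n,
      (G.s (ed i) = vx i ∧ G.t (ed i) = vx ⟨(i.val + 1) % n, Nat.mod_lt _ i.pos⟩) ∨
      (G.t (ed i) = vx i ∧ G.s (ed i) = vx ⟨(i.val + 1) % n, Nat.mod_lt _ i.pos⟩)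

/-- The underlying undirected multigraph of `G` is a forest. -/
def IsForestD (G : DiGraph) : Prop := ¬HasUndirCycle G

/-- The underlying undirected multigraph of `G` is a tree. -/
def IsTreeD (G : DiGraph) : Prop := ConnectedD G ∧ IsForestD G

/-- The multipath matroid of `G` is representable over the field `F`. -/
def RepOver (G : DiGraph) (F : Type) [Field F] : Prop :=
  ∃ (n : ℕ) (N : Matrix (Fin n) G.E F),
    ∀ m : Finset G.E, IsMultipath G m ↔
      LinearIndependent F (fun f : {x : G.E // x ∈ m} => N.transpose f.val)

end DiGraph

/-- A finite undirected multigraph. -/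
structure Multigraph where
  V : Type
  E : Type
  [fintV : Fintype V]
  [decV : DecidableEq V]
  [fintE : Fintype E]
  [decE : DecidableEq E]
  ends : E → Sym2 V

attribute [instance] Multigraph.fintV Multigraph.decV Multigraph.fintE Multigraph.decE

/-- The multigraph `M` has a cycle all of whose edges lie in `F`. -/
def Multigraph.HasCycleIn (M : Multigraph) (F : Finset M.E) : Prop :=
  ∃ (n : ℕ) (ed : Fin n → M.E) (vx : Fin n → M.V),
    0 < n ∧ Function.Injective ed ∧ Function.Injective vx ∧
    (∀ i : Fin n, ed i ∈ F) ∧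
    ∀ i : Fin n, M.ends (ed i) = s(vx i, vx ⟨(i.val + 1) % n, Nat.mod_lt _ i.pos⟩)


/-!
Call an edge cyclic if it lies on a coherently oriented cycle, loops included. By (MP2) a
cycle of length at least two is a connected component, so the cyclic edges fall into the edge
sets of their cycles, and a multipath omits at least one edge of each: a summand `U_{n-1,n}`.
For a non-cyclic edge `e`, (MP1) and the uniqueness of edges forbid non-cyclic edges other
than `e` both at the source and at the target of `e`. So the block of `e` is the star of
non-cyclic edges leaving `s e`, or the star entering `t e`, or `{e}`, and a multipath meets it
in at most one edge: a summand `U_{1,n}`. Out- and in-degrees at most one and the absence of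
coherent cycles are exactly the multipath conditions.
-/

open Finset

theorem List.forall_mem_of_getElem_succ_mod {α : Type*} {l : List α} {P : α → Prop}
    {i₀ : ℕ} (hi₀ : i₀ < l.length) (h₀ : P l[i₀])
    (hstep : ∀ (i : ℕ) (hi : i < l.length),
      P l[i] → P (l[(i + 1) % l.length]'(Nat.mod_lt _ (by omega)))) :
    ∀ x ∈ l, P x := by
  have hpos : 0 < l.length := by omega
  have hreach : ∀ k, P (l[(i₀ + k) % l.length]'(Nat.mod_lt _ hpos)) := by
    intro k
    induction k with
    | zero => simpa [Nat.mod_eq_of_lt hi₀] using h₀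
    | succ k ih =>
      have := hstep _ (Nat.mod_lt _ hpos) ih
      simpa [Nat.add_mod_mod, ← add_assoc] using this
  intro x hx
  obtain ⟨j, hj, rfl⟩ := List.getElem_of_mem hx
  have hj' : (i₀ + (j + l.length - i₀)) % l.length = j := by
    rw [show i₀ + (j + l.length - i₀) = j + l.length by omega, Nat.add_mod_right,
      Nat.mod_eq_of_lt hj]
  simpa [hj'] using hreach (j + l.length - i₀)

theorem existsUnique_mem_image_of_mem_self {α : Type*} [Fintype α] [DecidableEq α]
    {b : α → Finset α} (hself : ∀ a, a ∈ b a) (hb : ∀ a a', a' ∈ b a → b a' = b a)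
    (a : α) :
    ∃! B, B ∈ univ.image b ∧ a ∈ B := by
  refine ⟨b a, ⟨mem_image_of_mem b (mem_univ a), hself a⟩, ?_⟩
  rintro _ ⟨hB, ha⟩
  obtain ⟨a', -, rfl⟩ := mem_image.mp hB
  exact (hb a' a ha).symm

namespace DiGraph

variable {G : DiGraph} {C C' : List G.E} {e f : G.E}

theorem isCohCycle_singleton (hloop : G.s e = G.t e) : G.IsCohCycle [e] := by
  refine ⟨List.cons_ne_nil _ _, List.nodup_singleton _, List.nodup_singleton _, ?_⟩
  intro i
  fin_cases i
  simpa using hloop.symm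

namespace IsCohCycle

theorem t_getElem (hc : G.IsCohCycle C) (i : ℕ) (hi : i < C.length) :
    G.t C[i] = G.s (C[(i + 1) % C.length]'(Nat.mod_lt _ (by omega))) :=
  hc.2.2.2 ⟨i, hi⟩

theorem map_t_eq_rotate (hc : G.IsCohCycle C) : C.map G.t = (C.map G.s).rotate 1 :=
  List.ext_getElem (by simp) fun i hi _ => by
    simpa [List.getElem_rotate] using hc.t_getElem i (by simpa using hi)

theorem s_injOn (hc : G.IsCohCycle C) (he : e ∈ C) (hf : f ∈ C) (h : G.s e = G.s f) :
    e = f :=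
  List.inj_on_of_nodup_map hc.2.2.1 he hf h

theorem t_injOn (hc : G.IsCohCycle C) (he : e ∈ C) (hf : f ∈ C) (h : G.t e = G.t f) :
    e = f :=
  List.inj_on_of_nodup_map (hc.map_t_eq_rotate ▸ List.nodup_rotate.mpr hc.2.2.1) he hf h

theorem exists_s_eq_t (hc : G.IsCohCycle C) (he : e ∈ C) : ∃ f ∈ C, G.s f = G.t e := by
  have : G.t e ∈ (C.map G.s).rotate 1 := hc.map_t_eq_rotate ▸ List.mem_map_of_mem he
  simpa using this

theorem length_eq_one_of_s_eq_t (hc : G.IsCohCycle C) (he : e ∈ C) (hloop : G.s e = G.t e) :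
    C.length = 1 := by
  obtain ⟨i, hi, rfl⟩ := List.getElem_of_mem he
  have hsucc : (C.map G.s)[i]'(by simpa) =
      (C.map G.s)[(i + 1) % C.length]'(by simpa using Nat.mod_lt _ (by omega)) := by
    simpa [hloop] using hc.t_getElem i hi
  have hi' := (hc.2.2.1.getElem_inj_iff).mp hsucc
  rcases Nat.lt_or_ge (i + 1) C.length with h | h
  · rw [Nat.mod_eq_of_lt h] at hi'; omega
  · rw [show i + 1 = C.length by omega, Nat.mod_self] at hi'; omega

theorem two_le_length (hc : G.IsCohCycle C) (he : e ∈ C) (hne : G.s e ≠ G.t e) :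
    2 ≤ C.length := by
  by_contra! hlt
  have hlen : C.length = 1 := by have := List.length_pos_of_mem he; omega
  obtain ⟨a, rfl⟩ := List.length_eq_one_iff.mp hlen
  rw [List.mem_singleton] at he
  subst he
  exact hne (by simpa using (hc.t_getElem 0 (by simp)).symm)

theorem eq_singleton_of_s_eq_t (hc : G.IsCohCycle C) (he : e ∈ C) (hloop : G.s e = G.t e) :
    C = [e] := by
  obtain ⟨a, rfl⟩ := List.length_eq_one_iff.mp (hc.length_eq_one_of_s_eq_t he hloop)
  rw [List.mem_singleton.mp he]

theorem mem_of_s_eq (hMP2 : G.MP2) (hc : G.IsCohCycle C) (h2 : 2 ≤ C.length) (he : e ∈ C)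
    (h : G.s f = G.s e) : f ∈ C :=
  hMP2 C hc h2 f ⟨e, he, Or.inl h.symm⟩

theorem mem_of_s_eq_t (hMP2 : G.MP2) (hc : G.IsCohCycle C) (h2 : 2 ≤ C.length) (he : e ∈ C)
    (h : G.s f = G.t e) : f ∈ C := by
  obtain ⟨g, hg, hgs⟩ := hc.exists_s_eq_t he
  exact hc.mem_of_s_eq hMP2 h2 hg (h.trans hgs.symm)

theorem mem_of_t_eq (hMP2 : G.MP2) (hc : G.IsCohCycle C) (h2 : 2 ≤ C.length) (he : e ∈ C)
    (h : G.t f = G.t e) : f ∈ C := by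
  obtain ⟨g, hg, hgs⟩ := hc.exists_s_eq_t he
  exact hMP2 C hc h2 f ⟨g, hg, Or.inr (hgs.trans h.symm)⟩

theorem subset_of_mem (hMP2 : G.MP2) (hc : G.IsCohCycle C) (hc' : G.IsCohCycle C')
    (h2 : 2 ≤ C'.length) (hf : f ∈ C) (hf' : f ∈ C') : C ⊆ C' := by
  obtain ⟨i, hi, rfl⟩ := List.getElem_of_mem hf
  refine List.forall_mem_of_getElem_succ_mod hi hf' fun j hj hj' => ?_
  exact hc'.mem_of_s_eq_t hMP2 h2 hj' (hc.t_getElem j hj).symm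

theorem toFinset_eq_of_mem (hMP2 : G.MP2) (hc : G.IsCohCycle C) (hc' : G.IsCohCycle C')
    (hf : f ∈ C) (hf' : f ∈ C') : C.toFinset = C'.toFinset := by
  by_cases hloop : G.s f = G.t f
  · rw [hc.eq_singleton_of_s_eq_t hf hloop, hc'.eq_singleton_of_s_eq_t hf' hloop]
  · have h2 := hc.two_le_length hf hloop
    have h2' := hc'.two_le_length hf' hloop
    ext g
    simp only [List.mem_toFinset]
    exact ⟨fun hg => hc.subset_of_mem hMP2 hc' h2' hf hf' hg,
      fun hg => hc'.subset_of_mem hMP2 hc h2 hf' hf hg⟩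

end IsCohCycle

theorem eq_or_eq_of_s_eq_of_t_eq (hU : G.EdgeUnique) (hMP1 : G.MP1) {e₁ e₂ : G.E}
    (hne : G.s e ≠ G.t e) (hne₁ : G.s e₁ ≠ G.t e₁) (hne₂ : G.s e₂ ≠ G.t e₂)
    (hs : G.s e₁ = G.s e) (ht : G.t e₂ = G.t e) : e₁ = e ∨ e₂ = e := by
  by_contra! ⟨h₁, h₂⟩
  have haw : G.t e₁ ≠ G.t e := fun h => h₁ (hU e₁ e hs h hne₁)
  have huv : G.s e₂ ≠ G.s e := fun h => h₂ (hU e₂ e h ht hne₂)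
  have hav : G.t e₁ ≠ G.s e := hs ▸ hne₁.symm
  have huw : G.s e₂ ≠ G.t e := ht ▸ hne₂
  by_cases hau : G.t e₁ = G.s e₂
  · exact hMP1.1 ⟨G.t e₁, G.s e, G.t e, hav, haw, hne,
      ⟨e₁, hs, rfl⟩, ⟨e₂, hau.symm, ht⟩, ⟨e, rfl, rfl⟩⟩
  · exact hMP1.2.2.1 ⟨G.s e₂, G.t e, G.s e, G.t e₁, huw, huv, fun h => hau h.symm,
      hne.symm, haw.symm, hav.symm, ⟨e₂, rfl, ht⟩, ⟨e, rfl, rfl⟩, ⟨e₁, hs, rfl⟩⟩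

def OnCohCycle (G : DiGraph) (e : G.E) : Prop := ∃ C, G.IsCohCycle C ∧ e ∈ C

def outStar (G : DiGraph) (v : G.V) : Finset G.E := {f | G.s f = v ∧ ¬G.OnCohCycle f}

def inStar (G : DiGraph) (v : G.V) : Finset G.E := {f | G.t f = v ∧ ¬G.OnCohCycle f}

def block (G : DiGraph) (e : G.E) : Finset G.E :=
  if h : G.OnCohCycle e then h.choose.toFinset
  else if 1 < #(G.outStar (G.s e)) then G.outStar (G.s e)
  else if 1 < #(G.inStar (G.t e)) then G.inStar (G.t e)
  else {e}

def blockCap (G : DiGraph) (B : Finset G.E) : ℕ := if G.IsCohCycleSet B then #B - 1 else 1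

@[simp]
theorem mem_outStar {v : G.V} : f ∈ G.outStar v ↔ G.s f = v ∧ ¬G.OnCohCycle f := by
  simp [outStar]

@[simp]
theorem mem_inStar {v : G.V} : f ∈ G.inStar v ↔ G.t f = v ∧ ¬G.OnCohCycle f := by
  simp [inStar]

theorem onCohCycle_of_s_eq_t (h : G.s e = G.t e) : G.OnCohCycle e :=
  ⟨[e], isCohCycle_singleton h, List.mem_singleton_self e⟩

theorem block_of_mem_cycle (hMP2 : G.MP2) (hc : G.IsCohCycle C) (he : e ∈ C) :
    G.block e = C.toFinset := by
  have h : G.OnCohCycle e := ⟨C, hc, he⟩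
  rw [block, dif_pos h]
  exact h.choose_spec.1.toFinset_eq_of_mem hMP2 hc h.choose_spec.2 he

theorem block_of_one_lt_card_outStar (he : ¬G.OnCohCycle e)
    (h : 1 < #(G.outStar (G.s e))) : G.block e = G.outStar (G.s e) := by
  rw [block, dif_neg he, if_pos h]

theorem card_outStar_le_one_of_one_lt_card_inStar (hU : G.EdgeUnique) (hMP1 : G.MP1)
    (he : ¬G.OnCohCycle e) (h : 1 < #(G.inStar (G.t e))) : #(G.outStar (G.s e)) ≤ 1 := by
  have hne : G.s e ≠ G.t e := fun h => he (onCohCycle_of_s_eq_t h)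
  obtain ⟨e₂, he₂, he₂e⟩ := exists_mem_ne h e
  rw [mem_inStar] at he₂
  have hstar : ∀ e₁ ∈ G.outStar (G.s e), e₁ = e := by
    intro e₁ he₁
    rw [mem_outStar] at he₁
    refine (eq_or_eq_of_s_eq_of_t_eq hU hMP1 hne ?_ ?_ he₁.1 he₂.1).resolve_right he₂e
    · exact fun h => he₁.2 (onCohCycle_of_s_eq_t h)
    · exact fun h => he₂.2 (onCohCycle_of_s_eq_t h)
  exact card_le_one.mpr fun a ha b hb => (hstar a ha).trans (hstar b hb).symm

theorem block_of_one_lt_card_inStar (hU : G.EdgeUnique) (hMP1 : G.MP1)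
    (he : ¬G.OnCohCycle e) (h : 1 < #(G.inStar (G.t e))) :
    G.block e = G.inStar (G.t e) := by
  have hs := card_outStar_le_one_of_one_lt_card_inStar hU hMP1 he h
  rw [block, dif_neg he, if_neg hs.not_gt, if_pos h]

theorem block_of_card_le_one (he : ¬G.OnCohCycle e) (hs : #(G.outStar (G.s e)) ≤ 1)
    (ht : #(G.inStar (G.t e)) ≤ 1) : G.block e = {e} := by
  rw [block, dif_neg he, if_neg hs.not_gt, if_neg ht.not_gt]

theorem mem_block_self (e : G.E) : e ∈ G.block e := by
  unfold block
  split_ifs with h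
  · exact List.mem_toFinset.mpr h.choose_spec.2
  · simpa using h
  · simpa using h
  · exact mem_singleton_self e

theorem block_eq_of_mem (hU : G.EdgeUnique) (hMP1 : G.MP1) (hMP2 : G.MP2)
    (hf : f ∈ G.block e) : G.block f = G.block e := by
  by_cases he : G.OnCohCycle e
  · obtain ⟨C, hc, heC⟩ := he
    rw [block_of_mem_cycle hMP2 hc heC] at hf ⊢
    exact block_of_mem_cycle hMP2 hc (List.mem_toFinset.mp hf)
  by_cases hs : 1 < #(G.outStar (G.s e))
  · rw [block_of_one_lt_card_outStar he hs] at hf ⊢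
    obtain ⟨hfs, hf⟩ := mem_outStar.mp hf
    rw [← hfs] at hs ⊢
    exact block_of_one_lt_card_outStar hf hs
  by_cases ht : 1 < #(G.inStar (G.t e))
  · rw [block_of_one_lt_card_inStar hU hMP1 he ht] at hf ⊢
    obtain ⟨hft, hf⟩ := mem_inStar.mp hf
    rw [← hft] at ht ⊢
    exact block_of_one_lt_card_inStar hU hMP1 hf ht
  rw [block_of_card_le_one he (not_lt.mp hs) (not_lt.mp ht), mem_singleton] at hf
  rw [hf]

theorem blockCap_toFinset (hc : G.IsCohCycle C) : G.blockCap C.toFinset = C.length - 1 := by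
  rw [blockCap, if_pos ⟨C, hc, rfl⟩, List.toFinset_card_of_nodup hc.2.1]

theorem blockCap_eq_one {B : Finset G.E} (he : e ∈ B) (hne : ¬G.OnCohCycle e) :
    G.blockCap B = 1 := by
  rw [blockCap, if_neg]
  rintro ⟨C, hc, rfl⟩
  exact hne ⟨C, hc, List.mem_toFinset.mp he⟩

theorem IsMultipath.card_inter_block_le (hMP2 : G.MP2) {m : Finset G.E} (hm : G.IsMultipath m)
    (e : G.E) : #(m ∩ G.block e) ≤ G.blockCap (G.block e) := by
  obtain ⟨-, hms, hmt, hmc⟩ := hm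
  by_cases he : G.OnCohCycle e
  · obtain ⟨C, hc, heC⟩ := he
    rw [block_of_mem_cycle hMP2 hc heC, blockCap_toFinset hc,
      ← List.toFinset_card_of_nodup hc.2.1]
    have hproper : m ∩ C.toFinset ⊂ C.toFinset := by
      refine inter_subset_right.ssubset_of_ne fun h => hmc ⟨C, hc, fun g hg => ?_⟩
      exact (mem_inter.mp (h.ge (List.mem_toFinset.mpr hg))).1
    have := card_lt_card hproper
    omega
  rw [blockCap_eq_one (mem_block_self e) he, card_le_one]
  intro a ha b hb
  rw [mem_inter, block, dif_neg he] at ha hb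
  split_ifs at ha hb
  · exact hms a ha.1 b hb.1 ((mem_outStar.mp ha.2).1.trans (mem_outStar.mp hb.2).1.symm)
  · exact hmt a ha.1 b hb.1 ((mem_inStar.mp ha.2).1.trans (mem_inStar.mp hb.2).1.symm)
  · exact (mem_singleton.mp ha.2).trans (mem_singleton.mp hb.2).symm

section CardInterBlockLe

variable {m : Finset G.E}

theorem not_subset_of_card_inter_block_le (hMP2 : G.MP2)
    (hm : ∀ e, #(m ∩ G.block e) ≤ G.blockCap (G.block e)) (hc : G.IsCohCycle C) :
    ¬∀ g ∈ C, g ∈ m := by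
  intro hCm
  obtain ⟨e, he⟩ := List.exists_mem_of_ne_nil C hc.1
  have hcap := hm e
  rw [block_of_mem_cycle hMP2 hc he, blockCap_toFinset hc,
    inter_eq_right.mpr fun g hg => hCm g (List.mem_toFinset.mp hg),
    List.toFinset_card_of_nodup hc.2.1] at hcap
  have := List.length_pos_of_mem he
  omega

theorem eq_of_mem_inter_block_of_card_inter_block_le
    (hm : ∀ e, #(m ∩ G.block e) ≤ G.blockCap (G.block e)) (he : ¬G.OnCohCycle e) {a b : G.E}
    (ha : a ∈ m ∩ G.block e) (hb : b ∈ m ∩ G.block e) : a = b := by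
  have hcap := hm e
  rw [blockCap_eq_one (mem_block_self e) he] at hcap
  exact card_le_one.mp hcap a ha b hb

theorem s_injOn_of_card_inter_block_le (hMP2 : G.MP2)
    (hm : ∀ e, #(m ∩ G.block e) ≤ G.blockCap (G.block e))
    (hloop : ∀ e ∈ m, G.s e ≠ G.t e) (he : e ∈ m) (hf : f ∈ m) (hs : G.s e = G.s f) :
    e = f := by
  by_cases hec : G.OnCohCycle e
  · obtain ⟨C, hc, heC⟩ := hec
    exact hc.s_injOn heC
      (hc.mem_of_s_eq hMP2 (hc.two_le_length heC (hloop e he)) heC hs.symm) hs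
  by_cases hfc : G.OnCohCycle f
  · obtain ⟨C, hc, hfC⟩ := hfc
    exact hc.s_injOn (hc.mem_of_s_eq hMP2 (hc.two_le_length hfC (hloop f hf)) hfC hs) hfC hs
  by_contra hef
  have hstar : e ∈ G.outStar (G.s e) ∧ f ∈ G.outStar (G.s e) := by simp [hec, hfc, hs]
  rw [← block_of_one_lt_card_outStar hec (one_lt_card.mpr ⟨e, hstar.1, f, hstar.2, hef⟩)]
    at hstar
  exact hef (eq_of_mem_inter_block_of_card_inter_block_le hm hec
    (mem_inter.mpr ⟨he, hstar.1⟩) (mem_inter.mpr ⟨hf, hstar.2⟩))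

theorem t_injOn_of_card_inter_block_le (hU : G.EdgeUnique) (hMP1 : G.MP1) (hMP2 : G.MP2)
    (hm : ∀ e, #(m ∩ G.block e) ≤ G.blockCap (G.block e))
    (hloop : ∀ e ∈ m, G.s e ≠ G.t e) (he : e ∈ m) (hf : f ∈ m) (ht : G.t e = G.t f) :
    e = f := by
  by_cases hec : G.OnCohCycle e
  · obtain ⟨C, hc, heC⟩ := hec
    exact hc.t_injOn heC
      (hc.mem_of_t_eq hMP2 (hc.two_le_length heC (hloop e he)) heC ht.symm) ht
  by_cases hfc : G.OnCohCycle f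
  · obtain ⟨C, hc, hfC⟩ := hfc
    exact hc.t_injOn (hc.mem_of_t_eq hMP2 (hc.two_le_length hfC (hloop f hf)) hfC ht) hfC ht
  by_contra hef
  have hstar : e ∈ G.inStar (G.t e) ∧ f ∈ G.inStar (G.t e) := by simp [hec, hfc, ht]
  rw [← block_of_one_lt_card_inStar hU hMP1 hec
    (one_lt_card.mpr ⟨e, hstar.1, f, hstar.2, hef⟩)] at hstar
  exact hef (eq_of_mem_inter_block_of_card_inter_block_le hm hec
    (mem_inter.mpr ⟨he, hstar.1⟩) (mem_inter.mpr ⟨hf, hstar.2⟩))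

theorem isMultipath_of_card_inter_block_le (hU : G.EdgeUnique) (hMP1 : G.MP1) (hMP2 : G.MP2)
    (hm : ∀ e, #(m ∩ G.block e) ≤ G.blockCap (G.block e)) : G.IsMultipath m := by
  have hacyc := fun C => not_subset_of_card_inter_block_le (C := C) hMP2 hm
  have hloop : ∀ e ∈ m, G.s e ≠ G.t e := fun e he h =>
    hacyc _ (isCohCycle_singleton h) (by simpa using he)
  exact ⟨hloop, fun e he f hf => s_injOn_of_card_inter_block_le hMP2 hm hloop he hf,
    fun e he f hf => t_injOn_of_card_inter_block_le hU hMP1 hMP2 hm hloop he hf,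
    fun ⟨C, hc, hCm⟩ => hacyc C hc hCm⟩

end CardInterBlockLe

end DiGraph

/-- A partition `P` of the edges with caps `k` encodes the direct sum `⊕_{B ∈ P} U_{k B, #B}`. -/
theorem multipath_matroid_direct_sum_uniform (G : DiGraph) (hU : G.EdgeUnique)
    (hMP : G.IsMPDigraph) :
    ∃ (P : Finset (Finset G.E)) (k : Finset G.E → ℕ),
      (∀ e : G.E, ∃! B : Finset G.E, B ∈ P ∧ e ∈ B) ∧
      ∀ m : Finset G.E, G.IsMultipath m ↔ ∀ B ∈ P, (m ∩ B).card ≤ k B := by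
  obtain ⟨hMP1, hMP2⟩ := hMP
  refine ⟨univ.image G.block, G.blockCap,
    existsUnique_mem_image_of_mem_self G.mem_block_self
      fun _ _ => DiGraph.block_eq_of_mem hU hMP1 hMP2, fun m => ?_⟩
  rw [forall_mem_image]
  exact ⟨fun hm e _ => hm.card_inter_block_le hMP2 e,
    fun hm => DiGraph.isMultipath_of_card_inter_block_le hU hMP1 hMP2 fun e => hm (mem_univ e)⟩
end
end

section
/- Let G be an MP-digraph with multipath matroid M_G, and let e ∈ E(G) be an edge that is not a loop. Then the multipath matroid of the digraph deletion G \ e equals the matroid deletion M_G \ e, and the multipath matroid of the MP-contraction G ⫽ e is isomorphic to the matroid contraction M_G / e, via the natural bijection E(G) \ {e} → E(G ⫽ e). -/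
set_option autoImplicit false

noncomputable section

attribute [local instance] Classical.propDecidable

/-!
A set of edges contains a coherently oriented cycle iff it contains a nonempty endless subset, one
in which every edge is followed by another: walking along such successors must eventually revisit
a source vertex, and the stretch between the two visits is a cycle. In this form the deletion
statement is a transfer along an embedding of digraphs. For the contraction, each side forces the
edges of `m` neither to leave `s e` nor to enter `t e` (in `G` by the degree bounds at the ends of
`e`, in `G ⫽ e` because such edges become loops). On these edges `G ⫽ e` is the ordinary
contraction merging the two ends of `e`, and endless sets through the new vertex correspond to
endless sets of `G` through `e`.
-/

namespace DiGraph

def IsEndless (G : DiGraph) (S : Finset G.E) : Prop :=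
  ∀ f ∈ S, ∃ g ∈ S, G.t f = G.s g

theorem exists_cohCycle_of_walk (G : DiGraph) (w : ℕ → G.E)
    (hw : ∀ k, G.t (w k) = G.s (w (k + 1))) :
    ∃ c, G.IsCohCycle c ∧ ∀ g ∈ c, ∃ k, w k = g := by
  have hrep : ∃ j, ∃ i < j, G.s (w i) = G.s (w j) := by
    obtain ⟨a, b, hab, h⟩ := Finite.exists_ne_map_eq_of_infinite (fun k => G.s (w k))
    rcases hab.lt_or_gt with hab | hab
    · exact ⟨b, a, hab, h⟩
    · exact ⟨a, b, hab, h.symm⟩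
  obtain ⟨i, hij, hsi⟩ := Nat.find_spec hrep
  set j := Nat.find hrep
  have hinj : ∀ a < j, ∀ b < j, G.s (w a) = G.s (w b) → a = b := by
    intro a ha b hb h
    by_contra hne
    rcases lt_or_gt_of_ne hne with hab | hab
    · exact (Nat.find_min hrep hb) ⟨a, hab, h⟩
    · exact (Nat.find_min hrep ha) ⟨b, hab, h.symm⟩
  have hsrc : ((List.ofFn fun k : Fin (j - i) => w (i + k)).map G.s).Nodup := by
    rw [List.map_ofFn, List.nodup_ofFn]
    intro a b h
    have := hinj (i + a) (by omega) (i + b) (by omega) h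
    omega
  refine ⟨List.ofFn fun k : Fin (j - i) => w (i + k), ⟨?_, hsrc.of_map _, hsrc, ?_⟩, ?_⟩
  · simp only [ne_eq, List.ofFn_eq_nil_iff]
    omega
  · intro ⟨k, hk⟩
    simp only [List.length_ofFn, List.get_ofFn, Fin.cast_mk] at hk ⊢
    rcases Nat.lt_or_ge (k + 1) (j - i) with hk1 | hk1
    · rw [Nat.mod_eq_of_lt hk1, hw]
      rfl
    · rw [show k + 1 = j - i by omega, Nat.mod_self, hw, show i + k + 1 = j by omega, ← hsi]
      rfl
  · simp only [List.mem_ofFn, forall_exists_index]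
    rintro _ k rfl
    exact ⟨_, rfl⟩

theorem exists_cohCycle_iff_exists_endless (G : DiGraph) (m : Finset G.E) :
    (∃ c, G.IsCohCycle c ∧ ∀ g ∈ c, g ∈ m) ↔ ∃ S ⊆ m, S.Nonempty ∧ G.IsEndless S := by
  constructor
  · rintro ⟨c, ⟨hne, -, -, hnext⟩, hcm⟩
    refine ⟨c.toFinset, fun g hg => hcm g (List.mem_toFinset.mp hg),
      List.toFinset_nonempty_iff c |>.mpr hne, fun f hf => ?_⟩
    obtain ⟨i, rfl⟩ := List.get_of_mem (List.mem_toFinset.mp hf)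
    exact ⟨_, List.mem_toFinset.mpr (List.get_mem _ _), hnext i⟩
  · rintro ⟨S, hSm, ⟨f₀, hf₀⟩, hS⟩
    choose next hnext_mem hnext using hS
    let σ : S → S := fun f => ⟨next f f.2, hnext_mem f f.2⟩
    obtain ⟨c, hc, hcw⟩ := G.exists_cohCycle_of_walk (fun k => (σ^[k] ⟨f₀, hf₀⟩).1)
      fun k => by rw [Function.iterate_succ_apply']; exact hnext _ _
    refine ⟨c, hc, fun g hg => ?_⟩
    obtain ⟨k, rfl⟩ := hcw g hg
    exact hSm (σ^[k] ⟨f₀, hf₀⟩).2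

theorem isMultipath_iff (G : DiGraph) (m : Finset G.E) :
    G.IsMultipath m ↔ (∀ f ∈ m, G.s f ≠ G.t f) ∧
      (∀ f ∈ m, ∀ g ∈ m, G.s f = G.s g → f = g) ∧
      (∀ f ∈ m, ∀ g ∈ m, G.t f = G.t g → f = g) ∧
      ¬∃ S ⊆ m, S.Nonempty ∧ G.IsEndless S := by
  rw [IsMultipath, exists_cohCycle_iff_exists_endless]

section Embedding

variable {H G : DiGraph} {φ : H.E → G.E} {ψ : H.V → G.V}

theorem isEndless_image_iff (hψ : Function.Injective ψ)
    (hs : ∀ f, G.s (φ f) = ψ (H.s f)) (ht : ∀ f, G.t (φ f) = ψ (H.t f)) (S : Finset H.E) :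
    G.IsEndless (S.image φ) ↔ H.IsEndless S := by
  simp only [IsEndless, Finset.forall_mem_image, Finset.exists_mem_image, hs, ht, hψ.eq_iff]

theorem isMultipath_image_iff (hφ : Function.Injective φ) (hψ : Function.Injective ψ)
    (hs : ∀ f, G.s (φ f) = ψ (H.s f)) (ht : ∀ f, G.t (φ f) = ψ (H.t f)) (m : Finset H.E) :
    G.IsMultipath (m.image φ) ↔ H.IsMultipath m := by
  have hcycle : (∃ S ⊆ m.image φ, S.Nonempty ∧ G.IsEndless S) ↔
      ∃ S ⊆ m, S.Nonempty ∧ H.IsEndless S := by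
    simp only [Finset.subset_image_iff]
    constructor
    · rintro ⟨_, ⟨S, hSm, rfl⟩, hne, hS⟩
      exact ⟨S, hSm, Finset.image_nonempty.mp hne,
        (isEndless_image_iff hψ hs ht S).mp hS⟩
    · rintro ⟨S, hSm, hne, hS⟩
      exact ⟨_, ⟨S, hSm, rfl⟩, hne.image φ, (isEndless_image_iff hψ hs ht S).mpr hS⟩
  simp only [isMultipath_iff, Finset.forall_mem_image, hs, ht, ne_eq, hψ.eq_iff, hφ.eq_iff, hcycle]

end Embedding

section Contraction

variable {G : DiGraph} {e : G.E}

variable (G e) in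
def toCVert (u : G.V) : CVert G e :=
  if h : u ≠ G.s e ∧ u ≠ G.t e then Sum.inl ⟨u, h⟩ else Sum.inr ()

theorem toCVert_eq_inl {u : G.V} (h : u ≠ G.s e ∧ u ≠ G.t e) :
    toCVert G e u = Sum.inl ⟨u, h⟩ :=
  dif_pos h

theorem toCVert_eq_inr {u : G.V} (h : u = G.s e ∨ u = G.t e) : toCVert G e u = Sum.inr () :=
  dif_neg (by tauto)

theorem toCVert_eq_toCVert_iff {a b : G.V} :
    toCVert G e a = toCVert G e b ↔
      a = b ∨ (a = G.s e ∨ a = G.t e) ∧ (b = G.s e ∨ b = G.t e) := by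
  by_cases ha : a = G.s e ∨ a = G.t e <;> by_cases hb : b = G.s e ∨ b = G.t e
  · simp only [toCVert_eq_inr ha, toCVert_eq_inr hb, ha, hb]
    tauto
  · rw [toCVert_eq_inr ha, toCVert_eq_inl (by tauto)]
    refine ⟨fun h => absurd h Sum.inr_ne_inl, ?_⟩
    rintro (rfl | ⟨-, hb'⟩) <;> tauto
  · rw [toCVert_eq_inl (by tauto), toCVert_eq_inr hb]
    refine ⟨fun h => absurd h Sum.inl_ne_inr, ?_⟩
    rintro (rfl | ⟨ha', -⟩) <;> tauto
  · rw [toCVert_eq_inl (by tauto), toCVert_eq_inl (by tauto)]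
    refine ⟨fun h => Or.inl (congrArg Subtype.val (Sum.inl.inj h)), ?_⟩
    rintro (rfl | ⟨ha', -⟩)
    · rfl
    · tauto

theorem contrS_eq_toCVert {f : G.E} (hs : G.s f ≠ G.s e) (ht : G.t f ≠ G.t e) :
    contrS G e f = toCVert G e (G.s f) := by
  by_cases hw : G.s f = G.t e
  · exact (dif_pos (Or.inr (Or.inl hw))).trans (toCVert_eq_inr (Or.inr hw)).symm
  · exact (dif_neg (by tauto)).trans (toCVert_eq_inl ⟨hs, hw⟩).symm

theorem contrT_eq_toCVert {f : G.E} (hs : G.s f ≠ G.s e) (ht : G.t f ≠ G.t e) :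
    contrT G e f = toCVert G e (G.t f) := by
  by_cases hv : G.t f = G.s e
  · exact (dif_pos (Or.inl hv)).trans (toCVert_eq_inr (Or.inl hv)).symm
  · exact (dif_neg (by tauto)).trans (toCVert_eq_inl ⟨hv, ht⟩).symm

theorem contrS_eq_contrT_of_s_eq_or_t_eq {f : G.E} (h : G.s f = G.s e ∨ G.t f = G.t e) :
    contrS G e f = contrT G e f := by
  have hs : contrS G e f = Sum.inr () := dif_pos (by tauto)
  have ht : contrT G e f = Sum.inr () := dif_pos (by tauto)
  rw [hs, ht]

variable {m : Finset (mpContract G e).E}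

theorem exists_endless_of_exists_endless_mpContract (hs : ∀ f ∈ m, G.s f.1 ≠ G.s e)
    (ht : ∀ f ∈ m, G.t f.1 ≠ G.t e) (h : ∃ S ⊆ m, S.Nonempty ∧ (mpContract G e).IsEndless S) :
    ∃ S ⊆ insert e (m.image Subtype.val), S.Nonempty ∧ G.IsEndless S := by
  obtain ⟨S, hSm, hSne, hSend⟩ := h
  have hstep : ∀ f ∈ S, ∃ g ∈ S,
      G.t f.1 = G.s g.1 ∨ G.t f.1 = G.s e ∧ G.s g.1 = G.t e := by
    intro f hf
    obtain ⟨g, hg, (hfg : contrT G e f.1 = contrS G e g.1)⟩ := hSend f hf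
    rw [contrT_eq_toCVert (hs f (hSm hf)) (ht f (hSm hf)),
      contrS_eq_toCVert (hs g (hSm hg)) (ht g (hSm hg)), toCVert_eq_toCVert_iff] at hfg
    have := ht f (hSm hf)
    have := hs g (hSm hg)
    exact ⟨g, hg, by grind⟩
  by_cases hx : ∃ g ∈ S, G.s g.1 = G.t e
  · have hSe : ∀ f ∈ S, f.1 ∈ insert e (S.image Subtype.val) := fun f hf =>
      Finset.mem_insert_of_mem (Finset.mem_image_of_mem _ hf)
    refine ⟨insert e (S.image Subtype.val),
      Finset.insert_subset_insert _ (Finset.image_subset_image hSm),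
      Finset.insert_nonempty _ _, fun f hf => ?_⟩
    rcases Finset.mem_insert.mp hf with rfl | hf
    · obtain ⟨g, hg, hgs⟩ := hx
      exact ⟨g.1, hSe g hg, hgs.symm⟩
    · obtain ⟨f', hf', rfl⟩ := Finset.mem_image.mp hf
      obtain ⟨g, hg, hfg | hfg⟩ := hstep f' hf'
      · exact ⟨g.1, hSe g hg, hfg⟩
      · exact ⟨e, Finset.mem_insert_self _ _, hfg.1⟩
  · refine ⟨S.image Subtype.val, (Finset.image_subset_image hSm).trans
      (Finset.subset_insert _ _), hSne.image _, fun f hf => ?_⟩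
    obtain ⟨f', hf', rfl⟩ := Finset.mem_image.mp hf
    obtain ⟨g, hg, hfg | hfg⟩ := hstep f' hf'
    · exact ⟨g.1, Finset.mem_image_of_mem _ hg, hfg⟩
    · exact absurd ⟨g, hg, hfg.2⟩ hx

theorem exists_endless_mpContract_of_exists_endless (hne : G.s e ≠ G.t e)
    (hs : ∀ f ∈ m, G.s f.1 ≠ G.s e) (ht : ∀ f ∈ m, G.t f.1 ≠ G.t e)
    (h : ∃ S ⊆ insert e (m.image Subtype.val), S.Nonempty ∧ G.IsEndless S) :
    ∃ S ⊆ m, S.Nonempty ∧ (mpContract G e).IsEndless S := by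
  obtain ⟨S, hSM, ⟨g₀, hg₀⟩, hSend⟩ := h
  have hexit : e ∈ S → ∃ g ∈ S, g ≠ e ∧ G.s g = G.t e := by
    intro he
    obtain ⟨g, hg, h⟩ := hSend e he
    refine ⟨g, hg, ?_, h.symm⟩
    rintro rfl
    exact hne h.symm
  have hlift : ∀ g ∈ S, g ≠ e → ∃ f ∈ m.filter (·.1 ∈ S), f.1 = g := by
    intro g hg hge
    obtain ⟨f, hf, rfl⟩ := Finset.mem_image.mp ((Finset.mem_insert.mp (hSM hg)).resolve_left hge)
    exact ⟨f, Finset.mem_filter.mpr ⟨hf, hg⟩, rfl⟩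
  refine ⟨m.filter (·.1 ∈ S), Finset.filter_subset _ _, ?_, fun f hf => ?_⟩
  · by_cases hg₀e : g₀ = e
    · obtain ⟨g, hg, hge, -⟩ := hexit (hg₀e ▸ hg₀)
      obtain ⟨f, hf, -⟩ := hlift g hg hge
      exact ⟨f, hf⟩
    · obtain ⟨f, hf, -⟩ := hlift g₀ hg₀ hg₀e
      exact ⟨f, hf⟩
  obtain ⟨hfm, hfS⟩ := Finset.mem_filter.mp hf
  obtain ⟨g, hgS, hfg⟩ := hSend f.1 hfS
  have hT := contrT_eq_toCVert (hs f hfm) (ht f hfm)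
  by_cases hge : g = e
  · rw [hge] at hgS hfg
    obtain ⟨g', hg'S, hg'e, hg's⟩ := hexit hgS
    obtain ⟨f', hf', rfl⟩ := hlift g' hg'S hg'e
    have hf'm := (Finset.mem_filter.mp hf').1
    refine ⟨f', hf', show contrT G e f.1 = contrS G e f'.1 from ?_⟩
    rw [hT, contrS_eq_toCVert (hs f' hf'm) (ht f' hf'm), toCVert_eq_toCVert_iff]
    exact Or.inr ⟨Or.inl hfg, Or.inr hg's⟩
  · obtain ⟨f', hf', rfl⟩ := hlift g hgS hge
    have hf'm := (Finset.mem_filter.mp hf').1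
    refine ⟨f', hf', show contrT G e f.1 = contrS G e f'.1 from ?_⟩
    rw [hT, contrS_eq_toCVert (hs f' hf'm) (ht f' hf'm), hfg]

theorem isMultipath_mpContract_of_isMultipath_insert
    (h : G.IsMultipath (insert e (m.image Subtype.val))) : (mpContract G e).IsMultipath m := by
  rw [isMultipath_iff] at h ⊢
  obtain ⟨hloop, hsrc, htgt, hcyc⟩ := h
  have he : e ∈ insert e (m.image Subtype.val) := Finset.mem_insert_self _ _
  have hmem : ∀ f ∈ m, f.1 ∈ insert e (m.image Subtype.val) := fun f hf =>
    Finset.mem_insert_of_mem (Finset.mem_image_of_mem _ hf)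
  have hs : ∀ f ∈ m, G.s f.1 ≠ G.s e := fun f hf h => f.2 (hsrc _ (hmem f hf) _ he h)
  have ht : ∀ f ∈ m, G.t f.1 ≠ G.t e := fun f hf h => f.2 (htgt _ (hmem f hf) _ he h)
  have hback : ∀ f ∈ m, ¬(G.s f.1 = G.t e ∧ G.t f.1 = G.s e) := by
    rintro f hf ⟨hfs, hft⟩
    refine hcyc ⟨{e, f.1}, Finset.insert_subset he (by simpa using hmem f hf),
      Finset.insert_nonempty _ _, ?_⟩
    simp only [IsEndless, Finset.mem_insert, Finset.mem_singleton, forall_eq_or_imp,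
      exists_eq_or_imp, exists_eq_left, forall_eq]
    exact ⟨Or.inr hfs.symm, Or.inl hft⟩
  have hS : ∀ f ∈ m, contrS G e f.1 = toCVert G e (G.s f.1) := fun f hf =>
    contrS_eq_toCVert (hs f hf) (ht f hf)
  have hT : ∀ f ∈ m, contrT G e f.1 = toCVert G e (G.t f.1) := fun f hf =>
    contrT_eq_toCVert (hs f hf) (ht f hf)
  refine ⟨fun f hf (h : contrS G e f.1 = contrT G e f.1) => ?_,
    fun f hf g hg (h : contrS G e f.1 = contrS G e g.1) => ?_,
    fun f hf g hg (h : contrT G e f.1 = contrT G e g.1) => ?_,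
    fun h => hcyc (exists_endless_of_exists_endless_mpContract hs ht h)⟩
  · rw [hS f hf, hT f hf, toCVert_eq_toCVert_iff] at h
    have := hloop _ (hmem f hf)
    have := hs f hf
    have := ht f hf
    have := hback f hf
    tauto
  · rw [hS f hf, hS g hg, toCVert_eq_toCVert_iff] at h
    have := hs f hf
    have := hs g hg
    exact Subtype.ext (hsrc _ (hmem f hf) _ (hmem g hg) (by grind))
  · rw [hT f hf, hT g hg, toCVert_eq_toCVert_iff] at h
    have := ht f hf
    have := ht g hg
    exact Subtype.ext (htgt _ (hmem f hf) _ (hmem g hg) (by grind))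

theorem isMultipath_insert_of_isMultipath_mpContract (hne : G.s e ≠ G.t e)
    (h : (mpContract G e).IsMultipath m) : G.IsMultipath (insert e (m.image Subtype.val)) := by
  rw [isMultipath_iff] at h ⊢
  obtain ⟨hloop, hsrc, htgt, hcyc⟩ := h
  have hs : ∀ f ∈ m, G.s f.1 ≠ G.s e := fun f hf h =>
    hloop f hf (contrS_eq_contrT_of_s_eq_or_t_eq (Or.inl h))
  have ht : ∀ f ∈ m, G.t f.1 ≠ G.t e := fun f hf h =>
    hloop f hf (contrS_eq_contrT_of_s_eq_or_t_eq (Or.inr h))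
  have hS : ∀ f ∈ m, contrS G e f.1 = toCVert G e (G.s f.1) := fun f hf =>
    contrS_eq_toCVert (hs f hf) (ht f hf)
  have hT : ∀ f ∈ m, contrT G e f.1 = toCVert G e (G.t f.1) := fun f hf =>
    contrT_eq_toCVert (hs f hf) (ht f hf)
  have hM : ∀ g ∈ insert e (m.image Subtype.val), g = e ∨ ∃ f ∈ m, f.1 = g := fun g hg =>
    (Finset.mem_insert.mp hg).imp_right Finset.mem_image.mp
  refine ⟨fun g hg => ?_, fun g hg g' hg' h => ?_, fun g hg g' hg' h => ?_,
    fun h => hcyc (exists_endless_mpContract_of_exists_endless hne hs ht h)⟩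
  · rcases hM g hg with rfl | ⟨f, hf, rfl⟩
    · exact hne
    · intro h
      exact hloop f hf (show contrS G e f.1 = contrT G e f.1 by rw [hS f hf, hT f hf, h])
  · rcases hM g hg with rfl | ⟨f, hf, rfl⟩ <;> rcases hM g' hg' with rfl | ⟨f', hf', rfl⟩
    · rfl
    · exact absurd h.symm (hs f' hf')
    · exact absurd h (hs f hf)
    · exact congrArg Subtype.val (hsrc f hf f' hf'
        (show contrS G e f.1 = contrS G e f'.1 by rw [hS f hf, hS f' hf', h]))
  · rcases hM g hg with rfl | ⟨f, hf, rfl⟩ <;> rcases hM g' hg' with rfl | ⟨f', hf', rfl⟩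
    · rfl
    · exact absurd h.symm (ht f' hf')
    · exact absurd h (ht f hf)
    · exact congrArg Subtype.val (htgt f hf f' hf'
        (show contrT G e f.1 = contrT G e f'.1 by rw [hT f hf, hT f' hf', h]))

theorem isMultipath_mpContract_iff (hne : G.s e ≠ G.t e) :
    (mpContract G e).IsMultipath m ↔ G.IsMultipath (insert e (m.image Subtype.val)) :=
  ⟨isMultipath_insert_of_isMultipath_mpContract hne,
    isMultipath_mpContract_of_isMultipath_insert⟩

end Contraction

end DiGraph

open DiGraph in
theorem deletion_contraction_of_multipath_matroid_general (G : DiGraph)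
    (e : G.E) (hne : G.s e ≠ G.t e) :
    (∀ m : Finset (deleteEdge G e).E,
       (deleteEdge G e).IsMultipath m ↔
         G.IsMultipath (m.image (fun f => f.val))) ∧
    (∀ m : Finset (mpContract G e).E,
       (mpContract G e).IsMultipath m ↔
         G.IsMultipath (insert e (m.image (fun f => f.val)))) :=
  ⟨fun m => (isMultipath_image_iff (H := deleteEdge G e) (φ := Subtype.val)
      Subtype.val_injective Function.injective_id (fun _ => rfl) (fun _ => rfl) m).symm,
    fun _ => isMultipath_mpContract_iff hne⟩

open DiGraph in
/-- For an MP-digraph `G` and a non-loop edge `e`, the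
multipath matroid of the digraph deletion `G \ e` equals the matroid deletion
`M_G \ e`, and the multipath matroid of the MP-contraction `G ⫽ e` is
isomorphic to the matroid contraction `M_G / e`, under the natural bijection
`E(G) \ {e} → E(G ⫽ e)`. -/
theorem deletion_contraction_of_multipath_matroid (G : DiGraph)
    (hU : G.EdgeUnique) (hMP : G.IsMPDigraph) (e : G.E) (hne : G.s e ≠ G.t e) :
    (∀ m : Finset (deleteEdge G e).E,
       (deleteEdge G e).IsMultipath m ↔
         G.IsMultipath (m.image (fun f => f.val))) ∧
    (∀ m : Finset (mpContract G e).E,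
       (mpContract G e).IsMultipath m ↔
         G.IsMultipath (insert e (m.image (fun f => f.val)))) :=
  deletion_contraction_of_multipath_matroid_general G e hne
end
end
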